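/- Let $\mathcal{A}$ be a $k$-linear Grothendieck abelian category with a family $\{I_\lambda\}_{\lambda \in \Lambda}$ of nonzero objects and a function $|\cdot| \colon \Lambda \to \mathbb{Z}_{\ge 0}$ satisfying axioms (A1)-(A8) (listed in context). Define $L_\lambda$ to be the intersection of the kernels of all morphisms $I_\lambda \to I_\mu$ with $|\mu| < |\lambda|$. Then $L_\lambda$ is a simple object and equals the socle of $I_\lambda$. -/

import Mathlib

/-!
Every nonzero subobject `M` of `I λ` contains `L λ`: the quotient `I λ / M` is finitely
generated, so by (A8) it embeds into a finite sum of `I μ`'s, and by (A5)–(A6) each component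
`I λ → I μ` of `I λ ↠ I λ / M ↪ ⨁ I μ` is either zero or has `|μ| < |λ|`, so it kills `L λ`.
Moreover `L λ ≠ 0`: by (A2) and (A4) finitely many maps `I λ → I μ` with `|μ| < |λ|` span all
of them, so `L λ` is the kernel of one map into a finite sum of such `I μ`, which is not a
monomorphism by (A7). A nonzero subobject lying below every nonzero subobject is the unique
atom of the subobject lattice, i.e. the unique simple subobject, hence also the socle.
-/

open CategoryTheory CategoryTheory.Limits

universe v u

/-- An object is finitely generated if whenever it is the supremum of a directed family of
subobjects, it equals one of them. -/
def FinGenObj {C : Type u} [Category.{v} C] [Abelian C] [WellPowered.{v} C] [HasLimits C]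
    [HasColimits C] (X : C) : Prop :=
  ∀ S : Set (Subobject X), S.Nonempty → DirectedOn (· ≤ ·) S → Subobject.sSup.{v} S = ⊤ → ⊤ ∈ S

/-- The subobject `L_λ ⊆ I_λ`: the intersection of the kernels of all maps
`I_λ → I_μ` with `|μ| < |λ|`. -/
noncomputable def Lsub {C : Type u} [Category.{v} C] [Abelian C] [WellPowered.{v} C]
    [HasLimits C] [HasColimits C] {Λ : Type*} (I : Λ → C) (size : Λ → ℕ) (l : Λ) :
    Subobject (I l) :=
  Subobject.sInf.{v} {P : Subobject (I l) |
    ∃ (m : Λ) (f : I l ⟶ I m), size m < size l ∧ P = kernelSubobject f}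

section Order

variable {α : Type*} [PartialOrder α] [OrderBot α] {a : α}

theorem isAtom_of_forall_ne_bot_le (ha : a ≠ ⊥) (h : ∀ b, b ≠ ⊥ → a ≤ b) : IsAtom a :=
  ⟨ha, fun b hb => by_contra fun hb0 => (h b hb0).not_gt hb⟩

theorem setOf_isAtom_eq_singleton_of_forall_ne_bot_le (ha : a ≠ ⊥)
    (h : ∀ b, b ≠ ⊥ → a ≤ b) : {b | IsAtom b} = {a} := by
  ext b
  refine ⟨fun hb => ((hb.le_iff.mp (h b hb.1)).resolve_left ha).symm, ?_⟩
  rintro rfl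
  exact isAtom_of_forall_ne_bot_le ha h

end Order

namespace CategoryTheory.Abelian

variable {C : Type u} [Category.{v} C] [Abelian C]

theorem subobject_le_of_arrow_comp_cokernel_π {X : C} {P M : Subobject X}
    (h : P.arrow ≫ cokernel.π M.arrow = 0) : P ≤ M :=
  Subobject.le_of_comm (monoLift M.arrow P.arrow h) (monoLift_comp _ _ _)

theorem subobject_eq_top_of_forall_comp_eq_zero {X : C} (W : Subobject X)
    (h : ∀ {Z : C} (c : X ⟶ Z), W.arrow ≫ c = 0 → c = 0) : W = ⊤ := by
  have : Epi W.arrow := Preadditive.epi_of_cokernel_zero (h _ (cokernel.condition _))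
  exact (Subobject.isIso_arrow_iff_eq_top W).mp (isIso_of_mono_of_epi _)

theorem subobject_eq_top_of_pullback_eq_top {X Y : C} (π : X ⟶ Y) [Epi π] {P : Subobject Y}
    (h : (Subobject.pullback π).obj P = ⊤) : P = ⊤ := by
  rw [Subobject.pullback_obj, ← Subobject.isIso_iff_mk_eq_top] at h
  have : Epi (pullback.fst P.arrow π ≫ P.arrow) := by
    rw [pullback.condition]
    infer_instance
  have : Epi P.arrow := epi_of_epi (pullback.fst P.arrow π) P.arrow
  exact (Subobject.isIso_arrow_iff_eq_top P).mp (isIso_of_mono_of_epi _)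

variable [HasColimits C] [WellPowered.{v} C]

/-- The union contains `ker π` (it contains the pullback of any member of `S`), and its image
under `π` contains every member of `S`. -/
theorem sSup_image_pullback_eq_top {X Y : C} (π : X ⟶ Y) [Epi π] {S : Set (Subobject Y)}
    (hS : S.Nonempty) (hsup : Subobject.sSup.{v} S = ⊤) :
    Subobject.sSup.{v} ((Subobject.pullback π).obj '' S) = ⊤ := by
  refine subobject_eq_top_of_forall_comp_eq_zero _ fun c hc => ?_
  have hpb : ∀ P ∈ S, pullback.snd P.arrow π ≫ c = 0 := by
    intro P hP
    have hle := Subobject.le_sSup.{v} ((Subobject.pullback π).obj '' S) _ ⟨P, hP, rfl⟩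
    rw [Subobject.pullback_obj] at hle
    rw [← Subobject.ofMkLE_arrow hle, Category.assoc, hc, comp_zero]
  obtain ⟨P₀, hP₀⟩ := hS
  have hker : kernel.ι π ≫ c = 0 := by
    have hι : kernel.ι π = pullback.lift 0 (kernel.ι π) (by simp) ≫ pullback.snd P₀.arrow π :=
      (pullback.lift_snd _ _ _).symm
    rw [hι, Category.assoc, hpb P₀ hP₀, comp_zero]
  have hd : ∀ P ∈ S, P ≤ kernelSubobject (epiDesc π c hker) := by
    intro P hP
    refine le_kernelSubobject _ _ ((cancel_epi (pullback.fst P.arrow π)).mp ?_)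
    rw [comp_zero, ← Category.assoc, pullback.condition, Category.assoc, comp_epiDesc, hpb P hP]
  have hd0 : epiDesc π c hker = 0 := by
    have : IsIso (kernelSubobject (epiDesc π c hker)).arrow :=
      (Subobject.isIso_arrow_iff_eq_top _).mpr (top_le_iff.mp (hsup ▸ Subobject.sSup_le _ _ hd))
    exact (cancel_epi (kernelSubobject _).arrow).mp (by rw [kernelSubobject_arrow_comp, comp_zero])
  rw [← comp_epiDesc π c hker, hd0, comp_zero]

end CategoryTheory.Abelian

open CategoryTheory.Abelian

theorem FinGenObj.of_epi {C : Type u} [Category.{v} C] [Abelian C] [WellPowered.{v} C]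
    [HasLimits C] [HasColimits C] {X Y : C} (π : X ⟶ Y) [Epi π] (hX : FinGenObj X) :
    FinGenObj Y := by
  intro S hne hdir hsup
  obtain ⟨P, hP, htop⟩ := hX _ (hne.image _)
    (hdir.mono_comp fun _ _ h => (Subobject.pullback π).monotone h)
    (sSup_image_pullback_eq_top π hne hsup)
  exact subobject_eq_top_of_pullback_eq_top π htop ▸ hP

theorem CategoryTheory.Linear.comp_eq_zero_of_forall_comp_basis_eq_zero {k : Type*} [Semiring k]
    {C : Type u} [Category.{v} C] [Preadditive C] [Linear k C] {ι : Type*} {W X Y : C}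
    (b : Module.Basis ι k (X ⟶ Y)) {a : W ⟶ X} (h : ∀ i, a ≫ b i = 0) (f : X ⟶ Y) :
    a ≫ f = 0 :=
  LinearMap.congr_fun (b.ext (f₁ := Linear.leftComp k Y a) (f₂ := 0) h) f

section Lsub

attribute [local instance] Abelian.hasFiniteBiproducts

variable {C : Type u} [Category.{v} C] [Abelian C] [HasLimits C] [HasColimits C]
    [WellPowered.{v} C] {Λ : Type v} (I : Λ → C) (size : Λ → ℕ)

theorem Lsub_arrow_comp_eq_zero
    (A5 : ∀ l, ∀ f : CategoryTheory.End (I l), f ≠ 0 → IsUnit f)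
    (A6 : ∀ l m, ∀ f : I l ⟶ I m, f ≠ 0 → size m < size l ∨ l = m)
    {l μ : Λ} {M : Subobject (I l)} (hM : M ≠ ⊥) (f : I l ⟶ I μ) (hf : M.arrow ≫ f = 0) :
    (Lsub I size l).arrow ≫ f = 0 := by
  by_cases h0 : f = 0
  · rw [h0, comp_zero]
  rcases A6 l μ f h0 with hμ | rfl
  · have hle : Lsub I size l ≤ kernelSubobject f := Subobject.sInf_le _ _ ⟨μ, f, hμ, rfl⟩
    rw [← Subobject.ofLE_arrow hle, Category.assoc, kernelSubobject_arrow_comp, comp_zero]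
  · have : IsIso f := (isUnit_iff_isIso f).mp (A5 l f h0)
    refine absurd ?_ hM
    rw [← Subobject.mk_arrow M, Subobject.mk_eq_bot_iff_zero]
    exact zero_of_comp_mono f hf

theorem Lsub_le_of_ne_bot
    (A3 : ∀ l, FinGenObj (I l))
    (A5 : ∀ l, ∀ f : CategoryTheory.End (I l), f ≠ 0 → IsUnit f)
    (A6 : ∀ l m, ∀ f : I l ⟶ I m, f ≠ 0 → size m < size l ∨ l = m)
    (A8 : ∀ X : C, FinGenObj X → ∃ (ι : Type v) (_ : Fintype ι) (m : ι → Λ)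
      (f : X ⟶ ∐ (fun i => I (m i))), Mono f)
    {l : Λ} {M : Subobject (I l)} (hM : M ≠ ⊥) : Lsub I size l ≤ M := by
  obtain ⟨ι, _, m, ψ, _⟩ := A8 _ (FinGenObj.of_epi (cokernel.π M.arrow) (A3 l))
  let e := biproduct.isoCoproduct fun i => I (m i)
  refine subobject_le_of_arrow_comp_cokernel_π ((cancel_mono (ψ ≫ e.inv)).mp ?_)
  refine biproduct.hom_ext _ _ fun j => ?_
  simpa only [Category.assoc, zero_comp] using Lsub_arrow_comp_eq_zero I size A5 A6 hM
    (cokernel.π M.arrow ≫ ψ ≫ e.inv ≫ biproduct.π _ j)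
    (by rw [cokernel.condition_assoc, zero_comp])

theorem Lsub_ne_bot {k : Type*} [Field k] [Linear k C]
    (A2 : ∀ n : ℕ, {l : Λ | size l ≤ n}.Finite)
    (A4 : ∀ l m, FiniteDimensional k (I l ⟶ I m))
    (A7 : ∀ (l : Λ) (ι : Type v) (m : ι → Λ), (∀ i, size (m i) < size l) →
      ∀ f : I l ⟶ ∐ (fun i => I (m i)), ¬ Mono f)
    (l : Λ) : Lsub I size l ≠ ⊥ := by
  have : Finite {μ // size μ < size l} :=
    ((A2 (size l)).subset fun _ hμ => Nat.le_of_lt hμ).to_subtype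
  let b (μ : Λ) : Module.Basis (Fin (Module.finrank k (I l ⟶ I μ))) k (I l ⟶ I μ) :=
    have := A4 l μ
    Module.finBasis k _
  let ι := Σ μ : {μ // size μ < size l}, Fin (Module.finrank k (I l ⟶ I μ.1))
  let F : I l ⟶ ⨁ fun i : ι => I i.1.1 := biproduct.lift fun i => b i.1.1 i.2
  have hF : kernelSubobject F ≤ Lsub I size l := by
    refine Subobject.le_sInf _ _ ?_
    rintro _ ⟨μ, f, hμ, rfl⟩
    refine le_kernelSubobject _ _
      (Linear.comp_eq_zero_of_forall_comp_basis_eq_zero (b μ) (fun j => ?_) f)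
    rw [← biproduct.lift_π (fun i : ι => b i.1.1 i.2) ⟨⟨μ, hμ⟩, j⟩, ← Category.assoc,
      kernelSubobject_arrow_comp, zero_comp]
  intro hbot
  have : Mono F :=
    Preadditive.mono_of_kernel_zero (Subobject.mk_eq_bot_iff_zero.mp (le_bot_iff.mp (hbot ▸ hF)))
  exact A7 l ι (fun i => i.1.1) (fun i => i.1.2) (F ≫ (biproduct.isoCoproduct _).hom)
    inferInstance

end Lsub

theorem stmt_9_general {k : Type*} [Field k] {C : Type u} [Category.{v} C] [Abelian C]
    [Linear k C] [HasLimits C] [HasColimits C] [WellPowered.{v} C]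
    {Λ : Type v} (I : Λ → C) (size : Λ → ℕ)
    (A2 : ∀ n : ℕ, {l : Λ | size l ≤ n}.Finite)
    (A3 : ∀ l, FinGenObj (I l))
    (A4 : ∀ l m, FiniteDimensional k (I l ⟶ I m))
    (A5 : ∀ l, ∀ f : CategoryTheory.End (I l), f ≠ 0 → IsUnit f)
    (A6 : ∀ l m, ∀ f : I l ⟶ I m, f ≠ 0 → size m < size l ∨ l = m)
    (A7 : ∀ (l : Λ) (ι : Type v) (m : ι → Λ), (∀ i, size (m i) < size l) →
      ∀ f : I l ⟶ ∐ (fun i => I (m i)), ¬ Mono f)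
    (A8 : ∀ X : C, FinGenObj X → ∃ (ι : Type v) (_ : Fintype ι) (m : ι → Λ)
      (f : X ⟶ ∐ (fun i => I (m i))), Mono f)
    (l : Λ) :
    Simple ((Lsub I size l : C)) ∧
      Lsub I size l = Subobject.sSup.{v} {P : Subobject (I l) | Simple (P : C)} := by
  have hne : Lsub I size l ≠ ⊥ := Lsub_ne_bot I size A2 A4 A7 l
  have hle : ∀ M, M ≠ ⊥ → Lsub I size l ≤ M :=
    fun _ hM => Lsub_le_of_ne_bot I size A3 A5 A6 A8 hM
  have hsimples : {P : Subobject (I l) | Simple (P : C)} = {Lsub I size l} := by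
    simpa only [subobject_simple_iff_isAtom] using
      setOf_isAtom_eq_singleton_of_forall_ne_bot_le hne hle
  rw [hsimples]
  exact ⟨(subobject_simple_iff_isAtom _).mpr (isAtom_of_forall_ne_bot_le hne hle),
    le_antisymm (Subobject.le_sSup _ _ rfl) (Subobject.sSup_le _ _ fun _ => le_of_eq)⟩

/-- Under axioms (A1)–(A8), the object `L_λ` is simple and equals the socle
(the supremum of the simple subobjects) of `I_λ`. -/
theorem stmt_9 {k : Type*} [Field k] {C : Type u} [Category.{v} C] [Abelian C]
    [Linear k C] [HasLimits C] [HasColimits C] [AB5 C] [WellPowered.{v} C]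
    (Gsep : C) (hsep : IsSeparator Gsep)
    {Λ : Type v} (I : Λ → C) (size : Λ → ℕ)
    (hnz : ∀ l, ¬ IsZero (I l))
    (A1 : ∀ X : C, Subobject.sSup.{v} {P : Subobject X | FinGenObj (P : C)} = ⊤)
    (A2 : ∀ n : ℕ, {l : Λ | size l ≤ n}.Finite)
    (A3 : ∀ l, FinGenObj (I l))
    (A4 : ∀ l m, FiniteDimensional k (I l ⟶ I m))
    (A5 : ∀ l, ∀ f : CategoryTheory.End (I l), f ≠ 0 → IsUnit f)
    (A6 : ∀ l m, ∀ f : I l ⟶ I m, f ≠ 0 → size m < size l ∨ l = m)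
    (A7 : ∀ (l : Λ) (ι : Type v) (m : ι → Λ), (∀ i, size (m i) < size l) →
      ∀ f : I l ⟶ ∐ (fun i => I (m i)), ¬ Mono f)
    (A8 : ∀ X : C, FinGenObj X → ∃ (ι : Type v) (_ : Fintype ι) (m : ι → Λ)
      (f : X ⟶ ∐ (fun i => I (m i))), Mono f)
    (l : Λ) :
    Simple ((Lsub I size l : C)) ∧
      Lsub I size l = Subobject.sSup.{v} {P : Subobject (I l) | Simple (P : C)} :=
  stmt_9_general I size A2 A3 A4 A5 A6 A7 A8 l
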